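/- arXiv:2111.12097 — 3 statements merged into one kernel-verified Lean document; each statement's English description precedes it below -/
import Mathlib

section
/- Let G be a group with a homomorphism ρ̃ : G → Z₂ determining an action on U(1) and Z by complex conjugation / sign. Define SQ¹ = p̃ ∘ β ∘ ĩ : H^n(G, Z₂) → H^{n+1}(G, Z₂), where ĩ is induced by the inclusion Z₂ ↪ U(1), β is the Bockstein for 1 → Z → R → U(1) → 1 (with twisted action), and p̃ is induced by reduction Z → Z₂. Then for any x ∈ H^n(G, Z₂), SQ¹(x) = ρ̃ ∪ x + Sq¹(x), where ρ̃ is regarded as an element of H¹(G, Z₂) and Sq¹ is the untwisted Bockstein for 1 → Z₂ → Z₄ → Z₂ → 1. At the cochain level, if x̃ is any integer lift of x, then SQ¹(x) is represented by (1/2)[ (-1)^{ρ̃(g_1)} x̃(g_2,…,g_{n+1}) + Σ_j (-1)^j x̃(…,g_j g_{j+1},…) + (-1)^{n+1} x̃(g_1,…,g_n) ] mod 2. -/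
/-- The twisted inhomogeneous coboundary operator on integer-valued cochains, for the
action of `G` on `ℤ` by the sign `(-1)^{ρ(g)}`:
`(dω)(g₁,…,g_{n+1}) = (-1)^{ρ(g₁)} ω(g₂,…,g_{n+1})
  + ∑_{j=1}^{n} (-1)^j ω(…, g_j g_{j+1}, …) + (-1)^{n+1} ω(g₁,…,g_n)`.
Taking `ρ = 0` gives the untwisted differential. -/
def dInt {G : Type*} [Group G] (ρ : G → ZMod 2) (n : ℕ) (f : (Fin n → G) → ℤ) :
    (Fin (n + 1) → G) → ℤ :=
  fun g => (if ρ (g 0) = 1 then -1 else 1) * f (fun i => g i.succ)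
    + ∑ j : Fin (n + 1), (-1 : ℤ) ^ ((j : ℕ) + 1) * f (Fin.contractNth j (· * ·) g)

/-- let `ρ̃ : G → Z₂` be a homomorphism (twisting the action on `U(1)` and `ℤ`),
and let `x̃` be any integer lift of a `Z₂`-valued `n`-cocycle `x` (so the mod-2 reduction of
the untwisted differential of `x̃` vanishes).  Then the twisted differential `d_ρ x̃` is
even, and `SQ¹(x) := (1/2) d_ρ x̃ mod 2` satisfies, at the cochain level,
`SQ¹(x) = ρ̃ ∪ x + Sq¹(x)`, where `(ρ̃ ∪ x)(g₁,…,g_{n+1}) = ρ̃(g₁)·x(g₂,…,g_{n+1})` and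
`Sq¹(x) = (1/2) d x̃ mod 2` is the untwisted Bockstein. -/
theorem SQ1_eq_rho_cup_add_Sq1 {G : Type*} [Group G] (ρ : G → ZMod 2)
    (hρ : ∀ a b : G, ρ (a * b) = ρ a + ρ b)
    (n : ℕ) (xt : (Fin n → G) → ℤ)
    (hx : ∀ g : Fin (n + 1) → G, ((dInt (fun _ => (0 : ZMod 2)) n xt g : ℤ) : ZMod 2) = 0) :
    (∀ g : Fin (n + 1) → G, (2 : ℤ) ∣ dInt ρ n xt g) ∧
    (∀ g : Fin (n + 1) → G, (2 : ℤ) ∣ dInt (fun _ => (0 : ZMod 2)) n xt g) ∧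
    (∀ g : Fin (n + 1) → G,
      ((dInt ρ n xt g / 2 : ℤ) : ZMod 2)
        = ρ (g 0) * ((xt (fun i => g i.succ) : ℤ) : ZMod 2)
          + ((dInt (fun _ => (0 : ZMod 2)) n xt g / 2 : ℤ) : ZMod 2)) := by
  have h2 : ∀ g : Fin (n + 1) → G, (2 : ℤ) ∣ dInt (fun _ => (0 : ZMod 2)) n xt g := by
    intro g
    exact (ZMod.intCast_zmod_eq_zero_iff_dvd _ 2).mp (hx g)
  have key : ∀ g : Fin (n + 1) → G,
      dInt ρ n xt g = dInt (fun _ => (0 : ZMod 2)) n xt g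
        + ((if ρ (g 0) = 1 then (-1 : ℤ) else 1) - 1) * xt (fun i => g i.succ) := by
    intro g
    unfold dInt
    rw [if_neg (by decide : ¬ ((0 : ZMod 2) = 1))]
    ring
  refine ⟨?_, h2, ?_⟩
  · intro g
    rw [key g]
    refine dvd_add (h2 g) (Dvd.dvd.mul_right ?_ _)
    by_cases h : ρ (g 0) = 1 <;> simp [h]
  · intro g
    obtain ⟨k, hk⟩ := h2 g
    by_cases h : ρ (g 0) = 1
    · have h1 : dInt ρ n xt g = 2 * (k - xt (fun i => g i.succ)) := by
        rw [key g, hk, if_pos h]; ring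
      rw [h1, hk, Int.mul_ediv_cancel_left _ (by norm_num), Int.mul_ediv_cancel_left _ (by norm_num), h]
      push_cast
      rw [CharTwo.sub_eq_add]
      ring
    · have h0 : ρ (g 0) = 0 := (by decide : ∀ a : ZMod 2, ¬ a = 1 → a = 0) _ h
      have h1 : dInt ρ n xt g = dInt (fun _ => (0 : ZMod 2)) n xt g := by
        rw [key g, if_neg h]; ring
      rw [h1, h0]
      ring
end

section
/- Let Z act on Z₂ trivially (translation group p1 in one dimension, generated by T), let G_int be a group, and let η : G_int × G_int → Z₂ be a 2-cocycle. Then Ω(g_1,g_2,g_3) = exp(iπ x_1 η(a_2,a_3)), where g_i = (T^{x_i}, a_i) ∈ Z × G_int, is a U(1)-valued 3-cocycle on Z × G_int. Moreover, if η is not a coboundary (as a Z₂-valued cocycle), then Ω represents a nontrivial class in H³(Z × G_int, U(1)) whenever exp(iπη) is nontrivial in H²(G_int, U(1)). -/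
/-- `exp(iπ·) : Z₂ → U(1)`, with `U(1) = ℝ/ℤ` (so `exp(iπ k) ↦ k/2 mod ℤ`). -/
noncomputable def expIPi (z : ZMod 2) : AddCircle (1 : ℝ) :=
  (((z.val : ℝ) / 2 : ℝ) : AddCircle (1 : ℝ))

/-- The 3-cochain `Ω(g₁,g₂,g₃) = exp(iπ x₁ η(a₂,a₃))` on `ℤ × G_int` (translations written
multiplicatively), where `gᵢ = (T^{xᵢ}, aᵢ)`. -/
noncomputable def OmegaLSM {Gi : Type*} [Group Gi] (eta : Gi → Gi → ZMod 2)
    (g1 g2 g3 : Multiplicative ℤ × Gi) : AddCircle (1 : ℝ) :=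
  expIPi (((Multiplicative.toAdd g1.1 : ℤ) : ZMod 2) * eta g2.2 g3.2)

/-! Ω is the image under `exp(iπ·)` of the cross product of the parity cocycle `x` of `ℤ` with `η`,
and a cross product of cocycles is a cocycle. For nontriviality, slant with the translation `T`:
since `T` is central, the slant product `i_T` carries 3-coboundaries to 2-coboundaries, while
`i_T Ω = exp(iπη)` because `x` vanishes on `G_int`. So `Ω = δμ` would make `exp(iπη)` a
coboundary. -/

namespace TrivialCochain

variable {K A : Type*} [Mul K] [AddCommGroup A]

def d₁ (ν : K → A) (a b : K) : A := ν b - ν (a * b) + ν a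

def d₂ (μ : K → K → A) (g₁ g₂ g₃ : K) : A :=
  μ g₂ g₃ - μ (g₁ * g₂) g₃ + μ g₁ (g₂ * g₃) - μ g₁ g₂

def d₃ (Ω : K → K → K → A) (g₁ g₂ g₃ g₄ : K) : A :=
  Ω g₂ g₃ g₄ - Ω (g₁ * g₂) g₃ g₄ + Ω g₁ (g₂ * g₃) g₄ - Ω g₁ g₂ (g₃ * g₄) + Ω g₁ g₂ g₃

def slant (t : K) (Ω : K → K → K → A) (a b : K) : A := Ω t a b - Ω a t b + Ω a b t

theorem slant_d₂ (μ : K → K → A) {t a b : K} (ha : t * a = a * t) (hb : t * b = b * t) :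
    slant t (d₂ μ) a b = d₁ (fun c => μ c t - μ t c) a b := by
  simp only [slant, d₂, d₁, ha, hb]
  abel

theorem _root_.AddMonoidHom.map_d₃ {B : Type*} [AddCommGroup B] (φ : A →+ B)
    (Ω : K → K → K → A) (g₁ g₂ g₃ g₄ : K) :
    φ (d₃ Ω g₁ g₂ g₃ g₄) = d₃ (fun h₁ h₂ h₃ => φ (Ω h₁ h₂ h₃)) g₁ g₂ g₃ g₄ := by
  simp only [d₃, map_add, map_sub]

def cross {G H R : Type*} [Mul R] (x : G → R) (η : H → H → R) (g₁ g₂ g₃ : G × H) : R :=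
  x g₁.1 * η g₂.2 g₃.2

theorem d₃_cross_eq_zero {G H R : Type*} [Mul G] [Mul H] [CommRing R] {x : G → R}
    (hx : ∀ g h, x (g * h) = x g + x h) {η : H → H → R} (hη : ∀ a b c, d₂ η a b c = 0)
    (g₁ g₂ g₃ g₄ : G × H) : d₃ (cross x η) g₁ g₂ g₃ g₄ = 0 := by
  simp only [d₂] at hη
  simp only [d₃, cross, Prod.fst_mul, Prod.snd_mul, hx]
  linear_combination -x g₁.1 * hη g₂.2 g₃.2 g₄.2

end TrivialCochain

open TrivialCochain

theorem expIPi_add (z w : ZMod 2) : expIPi (z + w) = expIPi z + expIPi w := by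
  have zmod_two_cases : ∀ u : ZMod 2, u = 0 ∨ u = 1 := by decide
  rcases zmod_two_cases z with rfl | rfl <;> rcases zmod_two_cases w with rfl | rfl <;>
    simp only [expIPi, ZMod.val_zero, ZMod.val_one, Nat.cast_zero, Nat.cast_one, zero_div,
      zero_add, add_zero, AddCircle.coe_zero]
  rw [show (1 + 1 : ZMod 2) = 0 by decide, ZMod.val_zero, Nat.cast_zero, zero_div,
    ← AddCircle.coe_add, add_halves, AddCircle.coe_period, AddCircle.coe_zero]

noncomputable def expIPiHom : ZMod 2 →+ AddCircle (1 : ℝ) :=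
  AddMonoidHom.mk' expIPi expIPi_add

def parity (n : Multiplicative ℤ) : ZMod 2 := (Multiplicative.toAdd n : ℤ)

theorem parity_mul (m n : Multiplicative ℤ) : parity (m * n) = parity m + parity n := by
  simp [parity]

theorem omegaLSM_eq_expIPi_cross {Gi : Type*} [Group Gi] (eta : Gi → Gi → ZMod 2) :
    OmegaLSM eta = fun g₁ g₂ g₃ => expIPiHom (cross parity eta g₁ g₂ g₃) :=
  rfl

theorem slant_omegaLSM {Gi : Type*} [Group Gi] (eta : Gi → Gi → ZMod 2) (a b : Gi) :
    slant (Multiplicative.ofAdd 1, 1) (OmegaLSM eta) (1, a) (1, b) = expIPi (eta a b) := by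
  simp [slant, OmegaLSM, expIPi]

/-- for the 1D translation group `p1 = ℤ` (generated by `T`) and any group
`G_int` with a `Z₂`-valued 2-cocycle `η`, the function
`Ω(g₁,g₂,g₃) = exp(iπ x₁ η(a₂,a₃))` is a `U(1)`-valued 3-cocycle on `ℤ × G_int`.
Moreover, if `η` is not a `Z₂`-coboundary and `exp(iπη)` is nontrivial in
`H²(G_int, U(1))`, then `Ω` represents a nontrivial class in `H³(ℤ × G_int, U(1))`,
i.e. it is not a `U(1)`-coboundary. -/
theorem omegaLSM_cocycle_and_nontrivial {Gi : Type*} [Group Gi]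
    (eta : Gi → Gi → ZMod 2)
    (heta : ∀ a b c : Gi, eta b c + eta (a * b) c + eta a (b * c) + eta a b = 0) :
    (∀ g1 g2 g3 g4 : Multiplicative ℤ × Gi,
      OmegaLSM eta g2 g3 g4 - OmegaLSM eta (g1 * g2) g3 g4 + OmegaLSM eta g1 (g2 * g3) g4
        - OmegaLSM eta g1 g2 (g3 * g4) + OmegaLSM eta g1 g2 g3 = 0) ∧
    ((¬ ∃ ν : Gi → ZMod 2, ∀ a b : Gi, eta a b = ν a + ν b + ν (a * b)) →
      (¬ ∃ ν : Gi → AddCircle (1 : ℝ), ∀ a b : Gi,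
          expIPi (eta a b) = ν b - ν (a * b) + ν a) →
      ¬ ∃ μ : (Multiplicative ℤ × Gi) → (Multiplicative ℤ × Gi) → AddCircle (1 : ℝ),
          ∀ g1 g2 g3 : Multiplicative ℤ × Gi,
            OmegaLSM eta g1 g2 g3 = μ g2 g3 - μ (g1 * g2) g3 + μ g1 (g2 * g3) - μ g1 g2) := by
  refine ⟨fun g₁ g₂ g₃ g₄ => ?_, fun _ hnot ⟨μ, hμ⟩ => hnot ?_⟩
  · have hη : ∀ a b c, d₂ eta a b c = 0 := fun a b c => by
      simpa only [d₂, sub_eq_add_neg, ZMod.neg_eq_self_mod_two] using heta a b c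
    change d₃ (OmegaLSM eta) g₁ g₂ g₃ g₄ = 0
    rw [omegaLSM_eq_expIPi_cross, ← AddMonoidHom.map_d₃, d₃_cross_eq_zero parity_mul hη,
      map_zero]
  · set t : Multiplicative ℤ × Gi := (Multiplicative.ofAdd 1, 1)
    have ht : ∀ a : Gi, t * (1, a) = (1, a) * t := fun a => by simp [t]
    have hΩ : OmegaLSM eta = d₂ μ := by funext g₁ g₂ g₃; exact hμ g₁ g₂ g₃
    refine ⟨fun a => μ (1, a) t - μ t (1, a), fun a b => ?_⟩
    rw [← slant_omegaLSM, hΩ, slant_d₂ μ (ht a) (ht b)]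
    simp [d₁]
end

section
/- Let cm be the group generated by T₁, T₂, M with relations T₁T₂ = T₂T₁, M² = 1, MT₁M = T₂, MT₂M = T₁ (so cm ≅ Z² ⋊ Z₂ with the swap action). The function A_{x+y}(T₁^x T₂^y M^m) = x + y mod 2 is a well-defined 1-cocycle on cm valued in Z₂, and it satisfies the relations A_{x+y} ∪ A_{x+y} = 0 and A_{x+y} ∪ A_m = 0 in H²(cm, Z₂), where A_m(T₁^x T₂^y M^m) = m. -/
/-- The swap automorphism of `ℤ²` (written multiplicatively), exchanging `T₁` and `T₂`. -/
def swapAut : MulAut (Multiplicative ℤ × Multiplicative ℤ) :=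
  (MulEquiv.prodComm :
    (Multiplicative ℤ × Multiplicative ℤ) ≃* (Multiplicative ℤ × Multiplicative ℤ))

/-- The mirror action: the nontrivial element of `Z₂` acts by swapping the two translation
generators. -/
def cmφ : Multiplicative (ZMod 2) →* MulAut (Multiplicative ℤ × Multiplicative ℤ) where
  toFun s := if Multiplicative.toAdd s = 1 then swapAut else 1
  map_one' := if_neg (by decide)
  map_mul' := by
    intro a b
    have key : swapAut * swapAut = 1 := by
      ext x <;> rfl
    have h01 : ∀ u : ZMod 2, u = 0 ∨ u = 1 := by decide
    show (if Multiplicative.toAdd a + Multiplicative.toAdd b = 1 then swapAut else 1) =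
        (if Multiplicative.toAdd a = 1 then swapAut else 1) *
          (if Multiplicative.toAdd b = 1 then swapAut else 1)
    rcases h01 (Multiplicative.toAdd a) with ha | ha <;>
        rcases h01 (Multiplicative.toAdd b) with hb | hb <;>
      rw [ha, hb] <;> simp [key]

/-- The wallpaper group `cm ≅ ℤ² ⋊ Z₂`, with generators `T₁, T₂, M` satisfying
`T₁T₂ = T₂T₁`, `M² = 1`, `MT₁M = T₂`, `MT₂M = T₁`: every element is uniquely
`T₁ˣT₂ʸMᵐ`. -/
abbrev cmGroup :=
  SemidirectProduct (Multiplicative ℤ × Multiplicative ℤ) (Multiplicative (ZMod 2)) cmφ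

/-- The degree-1 cochain `A_{x+y}(T₁ˣT₂ʸMᵐ) = x + y mod 2`. -/
def Axy : cmGroup → ZMod 2 := fun g =>
  ((Multiplicative.toAdd g.left.1 + Multiplicative.toAdd g.left.2 : ℤ) : ZMod 2)

/-- The degree-1 cochain `A_m(T₁ˣT₂ʸMᵐ) = m`. -/
def Am : cmGroup → ZMod 2 := fun g => Multiplicative.toAdd g.right

/-- The integer `x + y` for `g = T₁ˣT₂ʸMᵐ`. -/
def sInt (g : cmGroup) : ℤ :=
  Multiplicative.toAdd g.left.1 + Multiplicative.toAdd g.left.2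

/-- The integer `x` for `g = T₁ˣT₂ʸMᵐ`. -/
def xInt (g : cmGroup) : ℤ := Multiplicative.toAdd g.left.1

lemma Axy_eq (g : cmGroup) : Axy g = ((sInt g : ℤ) : ZMod 2) := rfl

lemma Am_mul (g1 g2 : cmGroup) : Am (g1 * g2) = Am g1 + Am g2 := by
  simp [Am, SemidirectProduct.mul_right]

lemma cmφ_apply (s : Multiplicative (ZMod 2)) (a : Multiplicative ℤ × Multiplicative ℤ) :
    cmφ s a = if Multiplicative.toAdd s = 1 then a.swap else a := by
  by_cases h : Multiplicative.toAdd s = 1 <;>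
    simp [cmφ, h, swapAut, MulEquiv.prodComm]

lemma sInt_mul (g1 g2 : cmGroup) : sInt (g1 * g2) = sInt g1 + sInt g2 := by
  unfold sInt
  rw [SemidirectProduct.mul_left, cmφ_apply]
  by_cases h : Multiplicative.toAdd g1.right = 1 <;> simp [h] <;> ring

lemma xInt_mul (g1 g2 : cmGroup) :
    ((xInt (g1 * g2) : ℤ) : ZMod 2) =
      ((xInt g1 : ℤ) : ZMod 2) + ((xInt g2 : ℤ) : ZMod 2) + Am g1 * Axy g2 := by
  unfold xInt
  rw [SemidirectProduct.mul_left, cmφ_apply]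
  have h2 : ∀ u : ZMod 2, u + u = 0 := by decide
  by_cases h : Multiplicative.toAdd g1.right = 1
  · simp only [h, if_pos, Am, Axy, Prod.fst_mul, toAdd_mul, Prod.fst_swap]
    push_cast
    set a := ((Multiplicative.toAdd g1.left.1 : ℤ) : ZMod 2)
    set b := ((Multiplicative.toAdd g2.left.1 : ℤ) : ZMod 2)
    set c := ((Multiplicative.toAdd g2.left.2 : ℤ) : ZMod 2)
    have : (2 : ZMod 2) = 0 := rfl
    linear_combination -b * this
  · have h0 : Multiplicative.toAdd g1.right = 0 := by
      have := (by decide : ∀ u : ZMod 2, u = 0 ∨ u = 1)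
      rcases this (Multiplicative.toAdd g1.right) with h0 | h1
      · exact h0
      · exact absurd h1 h
    simp only [h, if_neg, Am, Axy, Prod.fst_mul, toAdd_mul]
    rw [h0]
    push_cast
    ring

lemma half_mul_two (a : ℤ) : 2 * (a * (a - 1) / 2) = a * (a - 1) := by
  apply Int.mul_ediv_cancel'
  rcases Int.even_or_odd a with ⟨k, hk⟩ | ⟨k, hk⟩
  · exact ⟨k * (a - 1), by rw [hk]; ring⟩
  · exact ⟨a * k, by rw [hk]; ring⟩

lemma binom_key (a b : ℤ) :
    (a + b) * ((a + b) - 1) / 2 = a * (a - 1) / 2 + b * (b - 1) / 2 + a * b := by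
  have h1 := half_mul_two (a + b)
  have h2 := half_mul_two a
  have h3 := half_mul_two b
  nlinarith [h1, h2, h3]

/-- `A_{x+y}` is a well-defined `Z₂`-valued 1-cocycle on `cm` (i.e. a
homomorphism to `Z₂`), and it satisfies `A_{x+y} ∪ A_{x+y} = 0` and `A_{x+y} ∪ A_m = 0` in
`H²(cm, Z₂)`: the 2-cochains `(g₁,g₂) ↦ A_{x+y}(g₁)A_{x+y}(g₂)` and
`(g₁,g₂) ↦ A_{x+y}(g₁)A_m(g₂)` are coboundaries. -/
theorem cm_Axy_relations :
    (∀ g1 g2 : cmGroup, Axy (g1 * g2) = Axy g1 + Axy g2) ∧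
    (∃ μ : cmGroup → ZMod 2, ∀ g1 g2 : cmGroup,
      Axy g1 * Axy g2 = μ g1 + μ g2 + μ (g1 * g2)) ∧
    (∃ μ : cmGroup → ZMod 2, ∀ g1 g2 : cmGroup,
      Axy g1 * Am g2 = μ g1 + μ g2 + μ (g1 * g2)) := by
  have hAxy : ∀ g1 g2 : cmGroup, Axy (g1 * g2) = Axy g1 + Axy g2 := by
    intro g1 g2
    rw [Axy_eq, Axy_eq, Axy_eq, sInt_mul]
    push_cast
    ring
  have h20 : (2 : ZMod 2) = 0 := rfl
  refine ⟨hAxy, ⟨fun g => ((sInt g * (sInt g - 1) / 2 : ℤ) : ZMod 2), ?_⟩,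
    ⟨fun g => Axy g * Am g + ((xInt g : ℤ) : ZMod 2), ?_⟩⟩
  · intro g1 g2
    beta_reduce
    rw [sInt_mul, binom_key, Axy_eq, Axy_eq]
    push_cast
    set a := ((sInt g1 : ℤ) : ZMod 2)
    set b := ((sInt g2 : ℤ) : ZMod 2)
    set u := ((sInt g1 * (sInt g1 - 1) / 2 : ℤ) : ZMod 2)
    set v := ((sInt g2 * (sInt g2 - 1) / 2 : ℤ) : ZMod 2)
    linear_combination -(u + v) * h20
  · intro g1 g2
    beta_reduce
    rw [hAxy, Am_mul, xInt_mul]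
    set a := Axy g1
    set b := Axy g2
    set m := Am g1
    set n := Am g2
    set x := ((xInt g1 : ℤ) : ZMod 2)
    set y := ((xInt g2 : ℤ) : ZMod 2)
    linear_combination -(a * m + b * n + x + y + m * b) * h20
end
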